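/- arXiv:1801.03553 — 2 statements merged into one kernel-verified Lean document; each statement's English description precedes it below -/
import Mathlib

section
/- Let c ∈ (0,∞), r ∈ (0,1), s > 0, t ≥ 0, and let F be a probability measure on ℝ supported in [0,∞) satisfying the Marchenko–Pastur equation for (c, H_t). Then for every z ∈ ℂ⁺, writing G = G_F(z), a = t(1−c) − z, and b = (t+s)(1−c) − z, G is a root of the cubic polynomial P_{t,z}(G) = A·G³ + B·G² + C·G + D, where A = t(t+s)c²z², B = a(t+s)cz + b·t·c·z, C = r·t·c·z + (1−r)(t+s)cz + a·b, and D = r·a + (1−r)·b; that is, A·G³ + B·G² + C·G + D = 0. -/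
open MeasureTheory ProbabilityTheory Filter Topology

/-- The Cauchy transform `G_F(z) = ∫ (z - x)⁻¹ dF(x)` of a measure `F` on `ℝ`. -/
noncomputable def cauchyTransform (F : Measure ℝ) (z : ℂ) : ℂ :=
  ∫ x, (z - (x : ℂ))⁻¹ ∂F

/-- The topological support of a measure on `ℝ`: points all of whose neighborhoods
have positive measure. -/
def msupport (μ : Measure ℝ) : Set ℝ :=
  {x | ∀ U ∈ nhds x, μ U ≠ 0}

/-- `F` satisfies the Marchenko–Pastur equation for `(c, H)`:
for every `z` in the upper half-plane,
`G_F(z) = ∫ (z - x(1 - c + c z G_F(z)))⁻¹ dH(x)`. -/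
def SatisfiesMP (c : ℝ) (H F : Measure ℝ) : Prop :=
  ∀ z : ℂ, 0 < z.im →
    cauchyTransform F z =
      ∫ x, (z - (x : ℂ) * (1 - (c : ℂ) + (c : ℂ) * z * cauchyTransform F z))⁻¹ ∂H

/-- The two-point measure `H_t = (1-r)δ_t + rδ_{t+s}`. -/
noncomputable def twoPoint (r s t : ℝ) : Measure ℝ :=
  ENNReal.ofReal (1 - r) • Measure.dirac t + ENNReal.ofReal r • Measure.dirac (t + s)

/-!
Since `F` lives on `[0, ∞)`, `Im (z G_F(z)) ≤ 0` on the upper half-plane, so with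
`w = 1 - c + c z G_F(z)` both `z - t w` and `z - (t + s) w` have positive imaginary part.
The Marchenko–Pastur equation for the two-point measure `H_t` reads
`G = (1 - r)/(z - t w) + r/(z - (t + s) w)`; clearing these non-zero denominators and
substituting `w` gives the cubic.
-/

lemma msupport_eq_support (μ : Measure ℝ) : msupport μ = μ.support := by
  ext x
  simp [msupport, Measure.mem_support_iff_forall, pos_iff_ne_zero]

lemma ae_mem_of_msupport_subset {μ : Measure ℝ} {s : Set ℝ} (h : msupport μ ⊆ s) :
    ∀ᵐ x ∂μ, x ∈ s :=
  mem_of_superset Measure.support_mem_ae (msupport_eq_support μ ▸ h)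

lemma integral_twoPoint {E : Type*} [NormedAddCommGroup E] [NormedSpace ℝ E] [CompleteSpace E]
    {r : ℝ} (hr0 : 0 ≤ r) (hr1 : r ≤ 1) (s t : ℝ) (f : ℝ → E) :
    ∫ x, f x ∂twoPoint r s t = (1 - r) • f t + r • f (t + s) := by
  have hint : ∀ (a k : ℝ), Integrable f (ENNReal.ofReal k • Measure.dirac a) := fun a k =>
    (integrable_dirac (by simp)).smul_measure ENNReal.ofReal_ne_top
  rw [twoPoint, integral_add_measure (hint t (1 - r)) (hint (t + s) r),
    integral_smul_measure, integral_smul_measure, integral_dirac, integral_dirac,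
    ENNReal.toReal_ofReal (by linarith), ENNReal.toReal_ofReal hr0]

section CauchyTransform

variable {z : ℂ}

lemma norm_inv_sub_ofReal_le (hz : 0 < z.im) (x : ℝ) : ‖(z - x)⁻¹‖ ≤ z.im⁻¹ := by
  have hne : z - x ≠ 0 := fun h => by simpa [sub_eq_zero.mp h] using hz.ne'
  rw [norm_inv, inv_le_inv₀ (norm_pos_iff.mpr hne) hz]
  simpa [abs_of_pos hz] using Complex.abs_im_le_norm (z - x)

lemma integrable_inv_sub_ofReal (F : Measure ℝ) [IsFiniteMeasure F] (hz : 0 < z.im) :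
    Integrable (fun x : ℝ => (z - x)⁻¹) F :=
  (integrable_const z.im⁻¹).mono'
    (measurable_const.sub Complex.measurable_ofReal).inv.aestronglyMeasurable
    (Eventually.of_forall (norm_inv_sub_ofReal_le hz))

lemma im_mul_inv_sub_ofReal (z : ℂ) (x : ℝ) :
    (z * (z - x)⁻¹).im = -x * z.im / Complex.normSq (z - x) := by
  simp only [Complex.mul_im, Complex.inv_re, Complex.inv_im, Complex.sub_re, Complex.sub_im,
    Complex.ofReal_re, Complex.ofReal_im, sub_zero]
  ring

lemma im_mul_cauchyTransform_nonpos (F : Measure ℝ) [IsFiniteMeasure F]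
    (hF : ∀ᵐ x ∂F, 0 ≤ x) (hz : 0 < z.im) : (z * cauchyTransform F z).im ≤ 0 := by
  rw [cauchyTransform, ← integral_const_mul, ← RCLike.im_to_complex,
    ← integral_im ((integrable_inv_sub_ofReal F hz).const_mul z)]
  refine integral_nonpos_of_ae ?_
  filter_upwards [hF] with x hx
  rw [RCLike.im_to_complex, im_mul_inv_sub_ofReal]
  exact div_nonpos_of_nonpos_of_nonneg (by nlinarith) (Complex.normSq_nonneg _)

end CauchyTransform

lemma im_sub_ofReal_mul_pos {x : ℝ} {z w : ℂ} (hx : 0 ≤ x) (hz : 0 < z.im) (hw : w.im ≤ 0) :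
    0 < (z - x * w).im := by
  rw [Complex.sub_im, Complex.im_ofReal_mul]
  nlinarith

lemma im_one_sub_add_mul_nonpos {c : ℝ} {z G : ℂ} (hc : 0 ≤ c) (hzG : (z * G).im ≤ 0) :
    (1 - c + c * z * G).im ≤ 0 := by
  rw [mul_assoc, Complex.add_im, Complex.im_ofReal_mul]
  simpa using mul_nonpos_of_nonneg_of_nonpos hc hzG

lemma twoPoint_cubic_eq_zero {c r t u z G : ℂ}
    (ht : z - t * (1 - c + c * z * G) ≠ 0) (hu : z - u * (1 - c + c * z * G) ≠ 0)
    (hG : G = (1 - r) * (z - t * (1 - c + c * z * G))⁻¹ + r * (z - u * (1 - c + c * z * G))⁻¹) :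
    t * u * c ^ 2 * z ^ 2 * G ^ 3
      + ((t * (1 - c) - z) * u * c * z + (u * (1 - c) - z) * t * c * z) * G ^ 2
      + (r * t * c * z + (1 - r) * u * c * z + (t * (1 - c) - z) * (u * (1 - c) - z)) * G
      + (r * (t * (1 - c) - z) + (1 - r) * (u * (1 - c) - z)) = 0 := by
  set w := 1 - c + c * z * G with hw
  have hcleared : G * ((z - t * w) * (z - u * w)) = (1 - r) * (z - u * w) + r * (z - t * w) := by
    have hu' : z - w * u ≠ 0 := by rwa [mul_comm]
    rw [hG]
    field_simp
  rw [hw] at hcleared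
  linear_combination hcleared

/-- For every `z ∈ ℂ⁺`, the Cauchy transform `G = G_F(z)` is a
root of the cubic `P_{t,z}(G) = A G³ + B G² + C G + D` with the coefficients
`A = t(t+s)c²z²`, `B = a(t+s)cz + btcz`, `C = rtcz + (1-r)(t+s)cz + ab`,
`D = ra + (1-r)b`, where `a = t(1-c) - z` and `b = (t+s)(1-c) - z`. -/
theorem stmt3 (c r s t : ℝ) (hc : 0 < c) (hr : r ∈ Set.Ioo (0 : ℝ) 1) (hs : 0 < s)
    (ht : 0 ≤ t) (F : Measure ℝ) [IsProbabilityMeasure F]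
    (hsupp : msupport F ⊆ Set.Ici 0)
    (hF : SatisfiesMP c (twoPoint r s t) F) :
    ∀ z : ℂ, 0 < z.im →
      let G := cauchyTransform F z
      let a := (t : ℂ) * (1 - (c : ℂ)) - z
      let b := ((t : ℂ) + (s : ℂ)) * (1 - (c : ℂ)) - z
      let A := (t : ℂ) * ((t : ℂ) + (s : ℂ)) * (c : ℂ) ^ 2 * z ^ 2
      let B := a * ((t : ℂ) + (s : ℂ)) * (c : ℂ) * z + b * (t : ℂ) * (c : ℂ) * z
      let C := (r : ℂ) * (t : ℂ) * (c : ℂ) * z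
        + (1 - (r : ℂ)) * ((t : ℂ) + (s : ℂ)) * (c : ℂ) * z + a * b
      let D := (r : ℂ) * a + (1 - (r : ℂ)) * b
      A * G ^ 3 + B * G ^ 2 + C * G + D = 0 := by
  intro z hz
  have hzG := im_mul_cauchyTransform_nonpos F (ae_mem_of_msupport_subset hsupp) hz
  have hne : ∀ x : ℝ, 0 ≤ x →
      z - x * (1 - c + c * z * cauchyTransform F z) ≠ 0 := fun x hx h => by
    simpa [h] using im_sub_ofReal_mul_pos hx hz (im_one_sub_add_mul_nonpos hc.le hzG)
  have hMP := hF z hz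
  rw [integral_twoPoint hr.1.le hr.2.le] at hMP
  simp only [Complex.real_smul] at hMP
  push_cast at hMP hne
  exact twoPoint_cubic_eq_zero (hne t ht) (by simpa using hne (t + s) (by linarith)) hMP
end

section
/- (Uniqueness in the Marchenko–Pastur equation.) Let c ∈ (0,∞), let H be a probability measure on [0,∞), and let z ∈ ℂ⁺. Then there is at most one complex number G belonging to the set D_{c,z} = {G ∈ ℂ : (1−c)/z + cG ∈ ℂ⁻} that satisfies G = ∫ (z − x(1 − c + c z G))⁻¹ dH(x); i.e., any two solutions of this equation lying in D_{c,z} are equal. -/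
open MeasureTheory ProbabilityTheory Filter Topology

/-!
Put `u = (1 - c)/z + cG`. Since `1 - c + czG = zu`, the equation reads `zG = ∫ (1 - xu)⁻¹ dH`,
which is equivalent to `z = u⁻¹ + c ∫ x/(1 - xu) dH`. Taking imaginary parts, `Im z > 0` and
`Im u < 0` force `c |u|² ∫ |x/(1 - xu)|² dH < 1`. Subtracting the equations of two solutions
`u₁ ≠ u₂` gives `1 = c u₁ u₂ ∫ x²/((1 - xu₁)(1 - xu₂)) dH`, and by AM-GM the modulus of the right
side is at most the mean of the two quantities bounded above, a contradiction.
-/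

namespace MarchenkoPastur

noncomputable def kernel (u : ℂ) (x : ℝ) : ℂ := x / (1 - x * u)

noncomputable def invMap (c : ℝ) (H : Measure ℝ) (u : ℂ) : ℂ :=
  u⁻¹ + c * ∫ x, kernel u x ∂H

lemma abs_mul_abs_im_le_norm_one_sub (x : ℝ) (u : ℂ) : |x| * |u.im| ≤ ‖1 - x * u‖ := by
  simpa [abs_mul] using Complex.abs_im_le_norm (1 - x * u)

section Kernel

variable {u : ℂ}

lemma one_sub_ofReal_mul_ne_zero (hu : u.im ≠ 0) (x : ℝ) : 1 - x * u ≠ 0 := by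
  intro h
  have hle := abs_mul_abs_im_le_norm_one_sub x u
  rw [h, norm_zero] at hle
  have hx : x = 0 := by simpa [hu] using le_antisymm hle (by positivity)
  simp [hx] at h

lemma norm_kernel_le (hu : u.im ≠ 0) (x : ℝ) : ‖kernel u x‖ ≤ |u.im|⁻¹ := by
  have hw : 0 < ‖1 - x * u‖ := norm_pos_iff.mpr (one_sub_ofReal_mul_ne_zero hu x)
  rw [kernel, norm_div, Complex.norm_real, Real.norm_eq_abs, div_le_iff₀ hw,
    inv_mul_eq_div, le_div_iff₀ (abs_pos.mpr hu)]
  exact abs_mul_abs_im_le_norm_one_sub x u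

lemma continuous_kernel (hu : u.im ≠ 0) : Continuous (kernel u) :=
  Complex.continuous_ofReal.div
    (continuous_const.sub (Complex.continuous_ofReal.mul continuous_const))
    (one_sub_ofReal_mul_ne_zero hu)

lemma kernel_sub_kernel {u₁ u₂ : ℂ} (hu₁ : u₁.im ≠ 0) (hu₂ : u₂.im ≠ 0) (x : ℝ) :
    kernel u₂ x - kernel u₁ x = (u₂ - u₁) * (kernel u₁ x * kernel u₂ x) := by
  have h₁ := one_sub_ofReal_mul_ne_zero hu₁ x
  have h₂ := one_sub_ofReal_mul_ne_zero hu₂ x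
  simp only [kernel]
  field_simp
  ring

lemma im_kernel (hu : u.im ≠ 0) (x : ℝ) : (kernel u x).im = u.im * ‖kernel u x‖ ^ 2 := by
  have hw : Complex.normSq (1 - x * u) ≠ 0 := by
    simpa using one_sub_ofReal_mul_ne_zero hu x
  rw [kernel, Complex.div_im, norm_div, div_pow, Complex.norm_real, Real.norm_eq_abs, sq_abs,
    Complex.sq_norm]
  simp only [Complex.ofReal_re, Complex.ofReal_im, Complex.sub_im, Complex.sub_re, Complex.one_im,
    Complex.one_re, Complex.im_ofReal_mul, Complex.re_ofReal_mul]
  field_simp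
  ring

end Kernel

section Integrals

variable {H : Measure ℝ} [IsFiniteMeasure H] {u u₁ u₂ : ℂ}

lemma integrable_of_continuous_of_norm_le {E : Type*} [NormedAddCommGroup E] {f : ℝ → E}
    (hf : Continuous f) {C : ℝ} (hC : ∀ x, ‖f x‖ ≤ C) : Integrable f H :=
  .of_bound hf.aestronglyMeasurable C (ae_of_all _ hC)

lemma integrable_kernel (hu : u.im ≠ 0) : Integrable (kernel u) H :=
  integrable_of_continuous_of_norm_le (continuous_kernel hu) (norm_kernel_le hu)

lemma integrable_norm_kernel_sq (hu : u.im ≠ 0) : Integrable (fun x ↦ ‖kernel u x‖ ^ 2) H :=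
  integrable_of_continuous_of_norm_le ((continuous_kernel hu).norm.pow 2) fun x ↦ by
    rw [norm_pow, norm_norm]
    exact pow_le_pow_left₀ (norm_nonneg _) (norm_kernel_le hu x) 2

lemma integrable_kernel_mul_kernel (hu₁ : u₁.im ≠ 0) (hu₂ : u₂.im ≠ 0) :
    Integrable (fun x ↦ kernel u₁ x * kernel u₂ x) H :=
  integrable_of_continuous_of_norm_le ((continuous_kernel hu₁).mul (continuous_kernel hu₂))
    fun x ↦ (norm_mul_le _ _).trans <|
      mul_le_mul (norm_kernel_le hu₁ x) (norm_kernel_le hu₂ x) (norm_nonneg _) (by positivity)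

lemma integral_kernel_sub_integral_kernel (hu₁ : u₁.im ≠ 0) (hu₂ : u₂.im ≠ 0) :
    ∫ x, kernel u₂ x ∂H - ∫ x, kernel u₁ x ∂H
      = (u₂ - u₁) * ∫ x, kernel u₁ x * kernel u₂ x ∂H := by
  rw [← integral_sub (integrable_kernel hu₂) (integrable_kernel hu₁), ← integral_const_mul]
  exact integral_congr_ae (ae_of_all _ (kernel_sub_kernel hu₁ hu₂))

lemma im_integral_kernel (hu : u.im ≠ 0) :
    (∫ x, kernel u x ∂H).im = u.im * ∫ x, ‖kernel u x‖ ^ 2 ∂H := by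
  have h := integral_im (integrable_kernel (H := H) hu)
  simp only [RCLike.im_to_complex] at h
  rw [← integral_const_mul, ← h]
  exact integral_congr_ae (ae_of_all _ (im_kernel hu))

lemma mul_norm_sq_mul_integral_norm_kernel_sq_lt_one {c : ℝ} (hu : u.im < 0)
    (hz : 0 < (invMap c H u).im) :
    c * ‖u‖ ^ 2 * ∫ x, ‖kernel u x‖ ^ 2 ∂H < 1 := by
  have hu0 : u ≠ 0 := by rintro rfl; simp at hu
  have hn : 0 < ‖u‖ ^ 2 := by positivity
  have him : (invMap c H u).im = -u.im * ((‖u‖ ^ 2)⁻¹ - c * ∫ x, ‖kernel u x‖ ^ 2 ∂H) := by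
    rw [invMap, Complex.add_im, Complex.inv_im, Complex.im_ofReal_mul, im_integral_kernel hu.ne,
      Complex.normSq_eq_norm_sq]
    ring
  rw [him] at hz
  have := mul_lt_mul_of_pos_left (sub_pos.mp ((pos_iff_pos_of_mul_pos hz).mp (by linarith))) hn
  rw [mul_inv_cancel₀ hn.ne'] at this
  linarith

lemma mul_norm_integral_kernel_mul_kernel_le {c : ℝ} (hc : 0 ≤ c) (hu₁ : u₁.im ≠ 0)
    (hu₂ : u₂.im ≠ 0) :
    c * ‖u₁‖ * ‖u₂‖ * ‖∫ x, kernel u₁ x * kernel u₂ x ∂H‖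
      ≤ (c * ‖u₁‖ ^ 2 * ∫ x, ‖kernel u₁ x‖ ^ 2 ∂H
          + c * ‖u₂‖ ^ 2 * ∫ x, ‖kernel u₂ x‖ ^ 2 ∂H) / 2 := by
  have hAMGM : ∀ x, c * ‖u₁‖ * ‖u₂‖ * ‖kernel u₁ x * kernel u₂ x‖
      ≤ (c * ‖u₁‖ ^ 2 * ‖kernel u₁ x‖ ^ 2 + c * ‖u₂‖ ^ 2 * ‖kernel u₂ x‖ ^ 2) / 2 := fun x ↦ by
    have := mul_le_mul_of_nonneg_left
      (two_mul_le_add_sq (‖u₁‖ * ‖kernel u₁ x‖) (‖u₂‖ * ‖kernel u₂ x‖)) hc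
    rw [norm_mul]
    linarith
  calc c * ‖u₁‖ * ‖u₂‖ * ‖∫ x, kernel u₁ x * kernel u₂ x ∂H‖
      ≤ c * ‖u₁‖ * ‖u₂‖ * ∫ x, ‖kernel u₁ x * kernel u₂ x‖ ∂H := by
        gcongr
        exact norm_integral_le_integral_norm _
    _ = ∫ x, c * ‖u₁‖ * ‖u₂‖ * ‖kernel u₁ x * kernel u₂ x‖ ∂H := (integral_const_mul _ _).symm
    _ ≤ ∫ x, (c * ‖u₁‖ ^ 2 * ‖kernel u₁ x‖ ^ 2 + c * ‖u₂‖ ^ 2 * ‖kernel u₂ x‖ ^ 2) / 2 ∂H :=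
        integral_mono ((integrable_kernel_mul_kernel hu₁ hu₂).norm.const_mul _)
          (((integrable_norm_kernel_sq hu₁).const_mul _).add
            ((integrable_norm_kernel_sq hu₂).const_mul _) |>.div_const 2) hAMGM
    _ = _ := by
        rw [integral_div, integral_add ((integrable_norm_kernel_sq hu₁).const_mul _)
          ((integrable_norm_kernel_sq hu₂).const_mul _), integral_const_mul, integral_const_mul]

lemma eq_of_invMap_eq {c : ℝ} (hc : 0 ≤ c) (hu₁ : u₁.im < 0) (hu₂ : u₂.im < 0)
    (hz : 0 < (invMap c H u₁).im) (h : invMap c H u₁ = invMap c H u₂) : u₁ = u₂ := by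
  by_contra hne
  have hu₁0 : u₁ ≠ 0 := by rintro rfl; simp at hu₁
  have hu₂0 : u₂ ≠ 0 := by rintro rfl; simp at hu₂
  set J := ∫ x, kernel u₁ x * kernel u₂ x ∂H
  have hdiff : u₁⁻¹ - u₂⁻¹ = c * ((u₂ - u₁) * J) := by
    rw [← integral_kernel_sub_integral_kernel hu₁.ne hu₂.ne]
    simp only [invMap] at h
    linear_combination h
  have hJ : (u₂ - u₁) * 1 = (u₂ - u₁) * (c * u₁ * u₂ * J) := by
    linear_combination u₁ * u₂ * hdiff - u₂ * mul_inv_cancel₀ hu₁0 + u₁ * mul_inv_cancel₀ hu₂0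
  have hone : 1 = c * ‖u₁‖ * ‖u₂‖ * ‖J‖ := by
    simpa [abs_of_nonneg hc] using
      congrArg norm (mul_left_cancel₀ (sub_ne_zero.mpr (Ne.symm hne)) hJ)
  have h₁ := mul_norm_sq_mul_integral_norm_kernel_sq_lt_one hu₁ hz
  have h₂ := mul_norm_sq_mul_integral_norm_kernel_sq_lt_one hu₂ (h ▸ hz)
  have := mul_norm_integral_kernel_mul_kernel_le (H := H) hc hu₁.ne hu₂.ne
  linarith

end Integrals

lemma invMap_eq_of_eq_integral {c : ℝ} {H : Measure ℝ} [IsProbabilityMeasure H] {z G : ℂ}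
    (hz : z ≠ 0) (hu : ((1 - (c : ℂ)) / z + c * G).im ≠ 0)
    (hG : G = ∫ x, (z - (x : ℂ) * (1 - (c : ℂ) + (c : ℂ) * z * G))⁻¹ ∂H) :
    invMap c H ((1 - (c : ℂ)) / z + c * G) = z := by
  set u := (1 - (c : ℂ)) / z + c * G
  have hu0 : u ≠ 0 := by rintro h; simp [h] at hu
  have hzu : z * u = 1 - c + c * z * G := by
    simp only [u]
    field_simp
  clear_value u
  have hintegrand : ∀ x : ℝ, (z - (x : ℂ) * (1 - (c : ℂ) + (c : ℂ) * z * G))⁻¹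
      = z⁻¹ * (1 + u * kernel u x) := fun x ↦ by
    have hw := one_sub_ofReal_mul_ne_zero hu x
    rw [← hzu, kernel, show z - x * (z * u) = z * (1 - x * u) by ring, mul_inv]
    congr 1
    field_simp
    ring
  have hzG : z * G = 1 + u * ∫ x, kernel u x ∂H := by
    rw [hG, integral_congr_ae (ae_of_all _ hintegrand), integral_const_mul,
      integral_add (integrable_const _) ((integrable_kernel hu).const_mul u), integral_const_mul]
    field_simp
    simp
  rw [invMap]
  field_simp
  linear_combination -hzu - c * hzG

end MarchenkoPastur

theorem stmt5_general (c : ℝ) (hc : 0 < c) (H : Measure ℝ) [IsProbabilityMeasure H]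
    (z : ℂ) (hz : 0 < z.im) (G₁ G₂ : ℂ)
    (hG₁D : ((1 - (c : ℂ)) / z + (c : ℂ) * G₁).im < 0)
    (hG₁ : G₁ = ∫ x, (z - (x : ℂ) * (1 - (c : ℂ) + (c : ℂ) * z * G₁))⁻¹ ∂H)
    (hG₂D : ((1 - (c : ℂ)) / z + (c : ℂ) * G₂).im < 0)
    (hG₂ : G₂ = ∫ x, (z - (x : ℂ) * (1 - (c : ℂ) + (c : ℂ) * z * G₂))⁻¹ ∂H) :
    G₁ = G₂ := by
  have hz0 : z ≠ 0 := by rintro rfl; simp at hz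
  have e₁ := MarchenkoPastur.invMap_eq_of_eq_integral hz0 hG₁D.ne hG₁
  have e₂ := MarchenkoPastur.invMap_eq_of_eq_integral hz0 hG₂D.ne hG₂
  have hu := MarchenkoPastur.eq_of_invMap_eq hc.le hG₁D hG₂D (by rwa [e₁]) (e₁.trans e₂.symm)
  exact mul_left_cancel₀ (Complex.ofReal_ne_zero.mpr hc.ne') (add_left_cancel hu)

/-- Uniqueness in the Marchenko–Pastur fixed-point equation: for
`z ∈ ℂ⁺`, any two solutions `G` of `G = ∫ (z - x(1 - c + czG))⁻¹ dH(x)` lying in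
`D_{c,z} = {G : (1-c)/z + cG ∈ ℂ⁻}` coincide. -/
theorem stmt5 (c : ℝ) (hc : 0 < c) (H : Measure ℝ) [IsProbabilityMeasure H]
    (hH : msupport H ⊆ Set.Ici 0) (z : ℂ) (hz : 0 < z.im) (G₁ G₂ : ℂ)
    (hG₁D : ((1 - (c : ℂ)) / z + (c : ℂ) * G₁).im < 0)
    (hG₁ : G₁ = ∫ x, (z - (x : ℂ) * (1 - (c : ℂ) + (c : ℂ) * z * G₁))⁻¹ ∂H)
    (hG₂D : ((1 - (c : ℂ)) / z + (c : ℂ) * G₂).im < 0)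
    (hG₂ : G₂ = ∫ x, (z - (x : ℂ) * (1 - (c : ℂ) + (c : ℂ) * z * G₂))⁻¹ ∂H) :
    G₁ = G₂ :=
  stmt5_general c hc H z hz G₁ G₂ hG₁D hG₁ hG₂D hG₂
end
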